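/- arXiv:1110.4865 — 2 statements merged into one kernel-verified Lean document; each statement's English description precedes it below -/
import Mathlib

section
/- Let X_0, ..., X_{m-1} be independent real random variables (conditionally, given some σ-algebra) such that for some constants C > 0 and b_0, ..., b_{m-1} > 0 and every integer 1 ≤ ν ≤ N, E[X_k^{2ν}] ≤ (C b_k)^{2ν}. Then E[(Σ_{k=0}^{m-1} X_k^2)^N] ≤ C^{2N} (Σ_{k=0}^{m-1} b_k^2)^N. -/
/-!
Expand `(∑ k, X k ^ 2) ^ N` into the monomials `∏ i, X (p i) ^ 2` indexed by the maps
`p : Fin N → Fin m`. Grouping the factors of a monomial by value turns it into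
`∏ j, (X j ^ 2) ^ θ j`, where `θ j ≤ N` is the number of `i` with `p i = j`; by independence its
expectation is `∏ j, E[X j ^ (2 θ j)] ≤ ∏ j, (C b j) ^ (2 θ j)`, which is the same monomial in the
numbers `(C b j) ^ 2`. Summing over `p` reverses the expansion.
-/

open MeasureTheory ProbabilityTheory Finset

theorem Fintype.prod_comp_eq_prod_pow_card_fiber {α ι M : Type*} [Fintype α] [Fintype ι]
    [DecidableEq ι] [CommMonoid M] (f : ι → M) (p : α → ι) :
    ∏ a, f (p a) = ∏ j, f j ^ #{a | p a = j} := by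
  rw [← Finset.prod_fiberwise' univ p]
  exact Finset.prod_congr rfl fun j _ => Finset.prod_const _

namespace ProbabilityTheory

variable {Ω ι : Type*} [MeasurableSpace Ω] {μ : Measure Ω} [Fintype ι] {Y : ι → Ω → ℝ}

theorem iIndepFun.integrable_fun_prod (hY : iIndepFun Y μ) (hint : ∀ i, Integrable (Y i) μ) :
    Integrable (fun ω => ∏ i, Y i ω) μ := by
  classical
  have := hY.isProbabilityMeasure
  suffices ∀ s : Finset ι, Integrable (∏ i ∈ s, Y i) μ by simpa only [prod_fn] using this univ
  intro s
  induction s using Finset.induction_on with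
  | empty =>
    rw [prod_empty]
    exact integrable_const 1
  | insert i s hi ih =>
    rw [prod_insert hi, mul_comm]
    exact (hY.indepFun_finsetProd_of_notMem₀ (fun j => (hint j).aemeasurable) hi).integrable_mul
      ih (hint i)

theorem iIndepFun.integral_fun_prod_le (hY : iIndepFun Y μ) (hnn : ∀ i, 0 ≤ᵐ[μ] Y i)
    (hmeas : ∀ i, AEStronglyMeasurable (Y i) μ) {c : ι → ℝ} (hc : ∀ i, ∫ ω, Y i ω ∂μ ≤ c i) :
    ∫ ω, ∏ i, Y i ω ∂μ ≤ ∏ i, c i := by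
  rw [hY.integral_fun_prod_eq_prod_integral hmeas]
  exact prod_le_prod (fun i _ => integral_nonneg_of_ae (hnn i)) fun i _ => hc i

theorem iIndepFun.integral_sum_pow_le (hY : iIndepFun Y μ) (hnn : ∀ i ω, 0 ≤ Y i ω)
    {N : ℕ} {a : ι → ℝ}
    (hint : ∀ i, ∀ ν : ℕ, 1 ≤ ν → ν ≤ N → Integrable (fun ω => Y i ω ^ ν) μ)
    (hmom : ∀ i, ∀ ν : ℕ, 1 ≤ ν → ν ≤ N → ∫ ω, Y i ω ^ ν ∂μ ≤ a i ^ ν) :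
    ∫ ω, (∑ i, Y i ω) ^ N ∂μ ≤ (∑ i, a i) ^ N := by
  classical
  have := hY.isProbabilityMeasure
  have hint₀ : ∀ i, ∀ ν ≤ N, Integrable (fun ω => Y i ω ^ ν) μ := by
    intro i ν hν
    rcases Nat.eq_zero_or_pos ν with rfl | hν₀
    · simp
    · exact hint i ν hν₀ hν
  have hmom₀ : ∀ i, ∀ ν ≤ N, ∫ ω, Y i ω ^ ν ∂μ ≤ a i ^ ν := by
    intro i ν hν
    rcases Nat.eq_zero_or_pos ν with rfl | hν₀
    · simp
    · exact hmom i ν hν₀ hν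
  have hmonomial : ∀ p : Fin N → ι, Integrable (fun ω => ∏ k, Y (p k) ω) μ ∧
      ∫ ω, ∏ k, Y (p k) ω ∂μ ≤ ∏ k, a (p k) := by
    intro p
    have hθ : ∀ j, #{k | p k = j} ≤ N := fun j => (card_filter_le _ _).trans_eq (card_fin N)
    have hZ : iIndepFun (fun j ω => Y j ω ^ #{k | p k = j}) μ :=
      hY.comp (fun j x => x ^ #{k | p k = j}) fun _ => by fun_prop
    have hfactor : (fun ω => ∏ k, Y (p k) ω) = fun ω => ∏ j, Y j ω ^ #{k | p k = j} :=
      funext fun ω => Fintype.prod_comp_eq_prod_pow_card_fiber (fun j => Y j ω) p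
    rw [hfactor, Fintype.prod_comp_eq_prod_pow_card_fiber a p]
    exact ⟨hZ.integrable_fun_prod fun j => hint₀ j _ (hθ j),
      hZ.integral_fun_prod_le (fun j => ae_of_all _ fun ω => pow_nonneg (hnn j ω) _)
        (fun j => (hint₀ j _ (hθ j)).aestronglyMeasurable) fun j => hmom₀ j _ (hθ j)⟩
  simp_rw [Fintype.sum_pow]
  rw [integral_finsetSum _ fun p _ => (hmonomial p).1]
  exact sum_le_sum fun p _ => (hmonomial p).2

end ProbabilityTheory

theorem moment_bound_sum_squares_general
    {Ω : Type*} [MeasurableSpace Ω] (μ : Measure Ω)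
    (m N : ℕ)
    (X : Fin m → Ω → ℝ)
    (hindep : iIndepFun X μ)
    (C : ℝ) (b : Fin m → ℝ)
    (hint : ∀ k, ∀ ν : ℕ, 1 ≤ ν → ν ≤ N →
      Integrable (fun ω => (X k ω) ^ (2 * ν)) μ)
    (hmom : ∀ k, ∀ ν : ℕ, 1 ≤ ν → ν ≤ N →
      (∫ ω, (X k ω) ^ (2 * ν) ∂μ) ≤ (C * b k) ^ (2 * ν)) :
    (∫ ω, (∑ k, (X k ω) ^ 2) ^ N ∂μ) ≤ C ^ (2 * N) * (∑ k, (b k) ^ 2) ^ N := by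
  have hsq : iIndepFun (fun k ω => X k ω ^ 2) μ := hindep.comp (fun _ x => x ^ 2) fun _ => by fun_prop
  calc (∫ ω, (∑ k, (X k ω) ^ 2) ^ N ∂μ) ≤ (∑ k, (C * b k) ^ 2) ^ N :=
        hsq.integral_sum_pow_le (fun k ω => sq_nonneg (X k ω))
          (fun k ν h₁ h₂ => by simpa only [← pow_mul] using hint k ν h₁ h₂)
          (fun k ν h₁ h₂ => by simpa only [← pow_mul] using hmom k ν h₁ h₂)
    _ = C ^ (2 * N) * (∑ k, (b k) ^ 2) ^ N := by
        simp_rw [mul_pow, ← mul_sum]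
        rw [mul_pow, pow_mul]

/-- If `X_0, …, X_{m-1}` are independent with `E[X_k^{2ν}] ≤ (C b_k)^{2ν}` for
all `1 ≤ ν ≤ N`, then `E[(Σ X_k²)^N] ≤ C^{2N} (Σ b_k²)^N`. -/
theorem moment_bound_sum_squares
    {Ω : Type*} [MeasurableSpace Ω] (μ : Measure Ω) [IsProbabilityMeasure μ]
    (m N : ℕ) (hN : 1 ≤ N)
    (X : Fin m → Ω → ℝ) (hmeas : ∀ k, Measurable (X k))
    (hindep : iIndepFun X μ)
    (C : ℝ) (hC : 0 < C) (b : Fin m → ℝ) (hb : ∀ k, 0 < b k)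
    (hint : ∀ k, ∀ ν : ℕ, 1 ≤ ν → ν ≤ N →
      Integrable (fun ω => (X k ω) ^ (2 * ν)) μ)
    (hmom : ∀ k, ∀ ν : ℕ, 1 ≤ ν → ν ≤ N →
      (∫ ω, (X k ω) ^ (2 * ν) ∂μ) ≤ (C * b k) ^ (2 * ν)) :
    (∫ ω, (∑ k, (X k ω) ^ 2) ^ N ∂μ) ≤ C ^ (2 * N) * (∑ k, (b k) ^ 2) ^ N :=
  moment_bound_sum_squares_general μ m N X hindep C b hint hmom
end

section
/- Let (p_k)_{k∈ℤ} be iid random variables in (0,1) with W_k := p_k/(1-p_k) square integrable, let (S_n) be the simple random walk on ℤ independent of (p_k), and let ε_k = (-1)^k. Set X_{2n} := Σ_{k=0}^{2n-1} ε_{S_k} ξ_k where, conditionally on S and (p_k), the ξ_k are independent geometric with parameter p_{S_k}. Then for every k ≥ 1, E[(ξ_0 - ξ_1)(ξ_{2k} - ξ_{2k+1})] = 2 Var(p_0/(1-p_0)) P(S_{2k} = 0). -/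
/-!
Conditionally on the walk and the environment the `ξ_k` are independent geometric variables
with means `W_{S_k}`, where `W_y = odds p_y = p_y / (1 - p_y)`; hence
`E[ξ_i ξ_j] = E[W_{S_i} W_{S_j}]` for `i ≠ j`. As the environment is iid and independent of the
walk, this equals `E[W_0]² + Var(W_0) P(S_i = S_j)`. Expanding the product, the covariance is
`Var(W_0)` times `P(S_0 = S_{2k}) - P(S_0 = S_{2k+1}) - P(S_1 = S_{2k}) + P(S_1 = S_{2k+1})`:
the middle two terms vanish because `S_n ≡ n mod 2`, and the last one equals `P(S_{2k} = 0)`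
because the increments of the walk are stationary.
-/

open MeasureTheory ProbabilityTheory
open scoped ENNReal

noncomputable def odds (p : ℝ) : ℝ := p / (1 - p)

lemma odds_nonneg {p : ℝ} (hp₀ : 0 ≤ p) (hp₁ : p ≤ 1) : 0 ≤ odds p :=
  div_nonneg hp₀ (sub_nonneg.2 hp₁)

lemma tsum_ofReal_one_sub_mul_pow {p : ℝ} (hp₀ : 0 ≤ p) (hp₁ : p < 1) :
    ∑' n : ℕ, ENNReal.ofReal ((1 - p) * p ^ n) = 1 := by
  rw [← ENNReal.ofReal_tsum_of_nonneg (fun n => by have := pow_nonneg hp₀ n; nlinarith)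
    ((summable_geometric_of_lt_one hp₀ hp₁).mul_left _), tsum_mul_left,
    tsum_geometric_of_lt_one hp₀ hp₁, mul_inv_cancel₀ (by linarith), ENNReal.ofReal_one]

lemma tsum_natCast_mul_ofReal_one_sub_mul_pow {p : ℝ} (hp₀ : 0 ≤ p) (hp₁ : p < 1) :
    ∑' n : ℕ, (n : ℝ≥0∞) * ENNReal.ofReal ((1 - p) * p ^ n) = ENNReal.ofReal (odds p) := by
  have hnorm : ‖p‖ < 1 := by rwa [Real.norm_of_nonneg hp₀]
  have hterm : ∀ n : ℕ, (n : ℝ≥0∞) * ENNReal.ofReal ((1 - p) * p ^ n)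
      = ENNReal.ofReal ((1 - p) * (n * p ^ n)) := fun n => by
    rw [← ENNReal.ofReal_natCast, ← ENNReal.ofReal_mul (Nat.cast_nonneg n)]; ring_nf
  rw [tsum_congr hterm, ← ENNReal.ofReal_tsum_of_nonneg
      (fun n => mul_nonneg (by linarith) (by positivity))
      ((summable_pow_mul_geometric_of_norm_lt_one 1 hnorm).mul_left (1 - p) |>.congr
        fun n => by simp),
    tsum_mul_left, tsum_coe_mul_geometric_of_norm_lt_one hnorm, odds]
  congr 1
  field_simp [show (1 : ℝ) - p ≠ 0 by linarith]

lemma ENNReal.tsum_pi_prod {α : Type*} :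
    ∀ {n : ℕ} (g : Fin n → α → ℝ≥0∞), ∑' m : Fin n → α, ∏ t, g t (m t) = ∏ t, ∑' x, g t x
  | 0, g => by simp
  | n + 1, g => by
    rw [← (Fin.consEquiv fun _ => α).tsum_eq, Fin.prod_univ_succ, ← ENNReal.tsum_pi_prod,
      ENNReal.tsum_prod', ← ENNReal.tsum_mul_right]
    simp [Fin.consEquiv, Fin.prod_univ_succ, ← ENNReal.tsum_mul_left]

lemma Int.even_sum_range_add_of_forall_eq_one_or_eq_neg_one {x : ℕ → ℤ}
    (hx : ∀ k, x k = 1 ∨ x k = -1) (n : ℕ) : Even (∑ k ∈ Finset.range n, x k + n) := by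
  induction n with
  | zero => simp
  | succ n ih =>
    obtain ⟨c, hc⟩ := ih
    rw [Finset.sum_range_succ]
    rcases hx n with h | h
    · exact ⟨c + 1, by push_cast; omega⟩
    · exact ⟨c, by push_cast; omega⟩

lemma Int.sum_range_ne_of_odd_add {x : ℕ → ℤ} (hx : ∀ k, x k = 1 ∨ x k = -1) {m n : ℕ}
    (hmn : Odd (m + n)) : ∑ k ∈ Finset.range m, x k ≠ ∑ k ∈ Finset.range n, x k := by
  obtain ⟨a, ha⟩ := Int.even_sum_range_add_of_forall_eq_one_or_eq_neg_one hx m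
  obtain ⟨b, hb⟩ := Int.even_sum_range_add_of_forall_eq_one_or_eq_neg_one hx n
  obtain ⟨c, hc⟩ := hmn
  omega

section

variable {Ω : Type*} [MeasurableSpace Ω] {μ : Measure Ω}

lemma measurable_apply_comp_of_countable {κ β : Type*} [Countable κ] [MeasurableSpace κ]
    [MeasurableSingletonClass κ] [MeasurableSpace β] {P : κ → Ω → β} (hP : ∀ y, Measurable (P y))
    {A : Ω → κ} (hA : Measurable A) : Measurable fun ω => P (A ω) ω :=
  (measurable_from_prod_countable_right (f := fun q : κ × Ω => P q.1 q.2) hP).comp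
    (hA.prodMk measurable_id)

lemma integral_sub_mul_sub {f₀ f₁ g₀ g₁ : Ω → ℝ} (h₀₀ : Integrable (fun ω => f₀ ω * g₀ ω) μ)
    (h₀₁ : Integrable (fun ω => f₀ ω * g₁ ω) μ) (h₁₀ : Integrable (fun ω => f₁ ω * g₀ ω) μ)
    (h₁₁ : Integrable (fun ω => f₁ ω * g₁ ω) μ) :
    ∫ ω, (f₀ ω - f₁ ω) * (g₀ ω - g₁ ω) ∂μ = ∫ ω, f₀ ω * g₀ ω ∂μ - ∫ ω, f₀ ω * g₁ ω ∂μ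
      - ∫ ω, f₁ ω * g₀ ω ∂μ + ∫ ω, f₁ ω * g₁ ω ∂μ := by
  simp_rw [sub_mul, mul_sub]
  rw [integral_sub (by exact h₀₀.sub h₀₁) (by exact h₁₀.sub h₁₁), integral_sub h₀₀ h₀₁,
    integral_sub h₁₀ h₁₁]
  ring

lemma lintegral_prod_comp_of_measure_preimage_eq {α : Type*} [Countable α] [MeasurableSpace α]
    [MeasurableSingletonClass α] {n : ℕ} {V : Ω → Fin n → α} (hV : Measurable V)
    {q : Fin n → Ω → α → ℝ≥0∞} (hq : ∀ t x, Measurable fun ω => q t ω x)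
    (hlaw : ∀ m, μ (V ⁻¹' {m}) = ∫⁻ ω, ∏ t, q t ω (m t) ∂μ) (f : Fin n → α → ℝ≥0∞) :
    ∫⁻ ω, ∏ t, f t (V ω t) ∂μ = ∫⁻ ω, ∏ t, ∑' x, f t x * q t ω x ∂μ := by
  have hqm : ∀ m : Fin n → α, Measurable fun ω => ∏ t, q t ω (m t) :=
    fun m => Finset.measurable_prod _ fun t _ => hq t (m t)
  calc ∫⁻ ω, ∏ t, f t (V ω t) ∂μ
      = ∑' m : Fin n → α, (∏ t, f t (m t)) * μ (V ⁻¹' {m}) := by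
        rw [← lintegral_map (measurable_of_countable fun m : Fin n → α => ∏ t, f t (m t)) hV,
          lintegral_countable']
        simp_rw [Measure.map_apply hV (measurableSet_singleton _)]
    _ = ∑' m : Fin n → α, ∫⁻ ω, ∏ t, f t (m t) * q t ω (m t) ∂μ := by
        simp_rw [hlaw, ← lintegral_const_mul _ (hqm _), Finset.prod_mul_distrib]
    _ = ∫⁻ ω, ∏ t, ∑' x, f t x * q t ω x ∂μ := by
        rw [← lintegral_tsum fun m => ((hqm m).const_mul (∏ t, f t (m t))).aemeasurable.congr
          (.of_forall fun ω => by simp [Finset.prod_mul_distrib])]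
        exact lintegral_congr fun ω => ENNReal.tsum_pi_prod fun t x => f t x * q t ω x

lemma lintegral_comp_eq_lintegral_lintegral_of_indepFun [IsFiniteMeasure μ]
    {β γ : Type*} [MeasurableSpace β] [MeasurableSpace γ] {I : Ω → β} {Z : Ω → γ}
    (hI : Measurable I) (hZ : Measurable Z) (hIZ : IndepFun I Z μ) {F : β → γ → ℝ≥0∞}
    (hF : Measurable (Function.uncurry F)) :
    ∫⁻ ω, F (I ω) (Z ω) ∂μ = ∫⁻ ω, ∫⁻ ω', F (I ω) (Z ω') ∂μ ∂μ := by
  calc ∫⁻ ω, F (I ω) (Z ω) ∂μ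
      = ∫⁻ p, Function.uncurry F p ∂((μ.map I).prod (μ.map Z)) := by
        rw [← hIZ.map_prod_eq_prod_map_map hI.aemeasurable hZ.aemeasurable,
          lintegral_map hF (hI.prodMk hZ)]
        rfl
    _ = ∫⁻ ω, ∫⁻ ω', F (I ω) (Z ω') ∂μ ∂μ := by
        rw [lintegral_prod _ hF.aemeasurable, lintegral_map hF.lintegral_prod_right' hI]
        exact lintegral_congr fun ω => lintegral_map (hF.comp measurable_prodMk_left) hZ

section MixedGeometric

variable {ξ : ℕ → Ω → ℕ} {r : ℕ → Ω → ℝ}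

lemma measure_forall_fin_eq_lintegral_prod [IsFiniteMeasure μ] (hξ : ∀ k, Measurable (ξ k))
    (hr : ∀ k ω, r k ω ∈ Set.Icc (0 : ℝ) 1) {β : Type*} [MeasurableSpace β] {G : Ω → β}
    (hG : Measurable G)
    (hcond : ∀ (n : ℕ) (m : ℕ → ℕ),
      μ[Set.indicator {ω | ∀ k < n, ξ k ω = m k} (fun _ => (1 : ℝ)) |
          MeasurableSpace.comap G inferInstance]
        =ᵐ[μ] fun ω => ∏ k ∈ Finset.range n, ((1 - r k ω) * r k ω ^ m k))
    (n : ℕ) (m : Fin n → ℕ) :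
    μ {ω | ∀ t : Fin n, ξ t ω = m t}
      = ∫⁻ ω, ∏ t : Fin n, ENNReal.ofReal ((1 - r t ω) * r t ω ^ m t) ∂μ := by
  set m' : ℕ → ℕ := fun k => if h : k < n then m ⟨k, h⟩ else 0
  have hfactor : ∀ k ω, 0 ≤ (1 - r k ω) * r k ω ^ m' k := fun k ω =>
    mul_nonneg (sub_nonneg.2 (hr k ω).2) (pow_nonneg (hr k ω).1 _)
  have hset : {ω | ∀ t : Fin n, ξ t ω = m t} = {ω | ∀ k < n, ξ k ω = m' k} := by
    ext ω
    simp only [Set.mem_ofPred_eq, Fin.forall_iff]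
    exact forall₂_congr fun k hk => by simp [m', hk]
  have hprod : ∀ ω, ∏ t : Fin n, ENNReal.ofReal ((1 - r t ω) * r t ω ^ m t)
      = ENNReal.ofReal (∏ k ∈ Finset.range n, (1 - r k ω) * r k ω ^ m' k) := fun ω => by
    rw [ENNReal.ofReal_prod_of_nonneg fun k _ => hfactor k ω,
      ← Fin.prod_univ_eq_prod_range (fun k => ENNReal.ofReal ((1 - r k ω) * r k ω ^ m' k))]
    simp [m']
  have hmeas : MeasurableSet {ω | ∀ k < n, ξ k ω = m' k} := by
    simp only [Set.ofPred_forall]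
    exact .iInter fun k => .iInter fun _ => measurableSet_eq_fun (hξ k) measurable_const
  have hint := (integrable_condExp (m := MeasurableSpace.comap G inferInstance) (μ := μ)
    (f := Set.indicator {ω | ∀ k < n, ξ k ω = m' k} (fun _ => (1 : ℝ)))).congr (hcond n m')
  rw [hset, lintegral_congr hprod, ← ofReal_integral_eq_lintegral_ofReal hint
      (.of_forall fun ω => Finset.prod_nonneg fun k _ => hfactor k ω),
    ← integral_congr_ae (hcond n m'), integral_condExp hG.comap_le,
    integral_indicator_const _ hmeas, smul_eq_mul, mul_one, ofReal_measureReal]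

lemma lintegral_natCast_mul_eq_lintegral_ofReal_odds_mul (hξ : ∀ k, Measurable (ξ k))
    (hr : ∀ k, Measurable (r k)) (hr01 : ∀ k ω, r k ω ∈ Set.Ico (0 : ℝ) 1)
    (hlaw : ∀ (n : ℕ) (m : Fin n → ℕ), μ {ω | ∀ t : Fin n, ξ t ω = m t}
      = ∫⁻ ω, ∏ t : Fin n, ENNReal.ofReal ((1 - r t ω) * r t ω ^ m t) ∂μ)
    {i j : ℕ} (hij : i ≠ j) :
    ∫⁻ ω, (ξ i ω : ℝ≥0∞) * ξ j ω ∂μ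
      = ∫⁻ ω, ENNReal.ofReal (odds (r i ω)) * ENNReal.ofReal (odds (r j ω)) ∂μ := by
  classical
  set n := i + j + 1
  set s : Finset (Fin n) := {⟨i, by omega⟩, ⟨j, by omega⟩}
  have hs : ∀ g : Fin n → ℝ≥0∞, ∏ t ∈ s, g t = g ⟨i, by omega⟩ * g ⟨j, by omega⟩ :=
    fun g => Finset.prod_pair (by simpa [Fin.ext_iff] using hij)
  have hmixture := lintegral_prod_comp_of_measure_preimage_eq (μ := μ)
    (V := fun ω (t : Fin n) => ξ t ω) (measurable_pi_lambda _ fun t => hξ t)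
    (q := fun t ω x => ENNReal.ofReal ((1 - r t ω) * r t ω ^ x))
    (fun t x => ((measurable_const.sub (hr t)).mul ((hr t).pow_const x)).ennreal_ofReal)
    (fun m => by rw [← hlaw n m]; congr 1; ext ω; simp [funext_iff])
    (fun t x => if t ∈ s then (x : ℝ≥0∞) else 1)
  have hmean : ∀ t ω, ∑' x : ℕ, (if t ∈ s then (x : ℝ≥0∞) else 1)
      * ENNReal.ofReal ((1 - r t ω) * r t ω ^ x)
      = if t ∈ s then ENNReal.ofReal (odds (r t ω)) else 1 := fun t ω => by
    split_ifs
    · exact tsum_natCast_mul_ofReal_one_sub_mul_pow (hr01 t ω).1 (hr01 t ω).2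
    · simpa using tsum_ofReal_one_sub_mul_pow (hr01 t ω).1 (hr01 t ω).2
  simp_rw [hmean, Finset.prod_ite_mem, Finset.univ_inter, hs] at hmixture
  exact hmixture

end MixedGeometric

section Environment

variable [IsProbabilityMeasure μ]

lemma lintegral_comp_apply_mul_comp_apply_of_iIndepFun {κ β : Type*} [Countable κ]
    [MeasurableSpace κ] [MeasurableSingletonClass κ] [MeasurableSpace β]
    {P : κ → Ω → β} (hP : ∀ y, Measurable (P y)) (hPindep : iIndepFun P μ) {y₀ : κ}
    (hPid : ∀ y, IdentDistrib (P y) (P y₀) μ μ) {A B : Ω → κ} (hA : Measurable A)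
    (hB : Measurable B) (hind : IndepFun (fun ω => (A ω, B ω)) (fun ω y => P y ω) μ)
    {u : β → ℝ≥0∞} (hu : Measurable u) :
    ∫⁻ ω, u (P (A ω) ω) * u (P (B ω) ω) ∂μ
      = (∫⁻ ω, u (P y₀ ω) ∂μ) ^ 2 * μ {ω | A ω = B ω}ᶜ
        + (∫⁻ ω, u (P y₀ ω) ^ 2 ∂μ) * μ {ω | A ω = B ω} := by
  classical
  have hquenched : ∀ a b : κ, ∫⁻ ω, u (P a ω) * u (P b ω) ∂μ
      = if a = b then ∫⁻ ω, u (P y₀ ω) ^ 2 ∂μ else (∫⁻ ω, u (P y₀ ω) ∂μ) ^ 2 := by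
    intro a b
    split_ifs with hab
    · subst hab
      simp_rw [← sq]
      exact ((hPid a).comp (hu.pow_const 2)).lintegral_eq
    · rw [lintegral_mul_eq_lintegral_mul_lintegral_of_indepFun'' (f := fun ω => u (P a ω))
        (g := fun ω => u (P b ω)) (hu.comp (hP a)).aemeasurable
        (hu.comp (hP b)).aemeasurable ((hPindep.indepFun hab).comp hu hu), sq]
      exact congr_arg₂ (· * ·) ((hPid a).comp hu).lintegral_eq ((hPid b).comp hu).lintegral_eq
  have hF : Measurable (Function.uncurry fun (q : κ × κ) (z : κ → β) => u (z q.1) * u (z q.2)) :=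
    measurable_from_prod_countable_right fun q =>
      (hu.comp (measurable_pi_apply q.1)).mul (hu.comp (measurable_pi_apply q.2))
  rw [lintegral_comp_eq_lintegral_lintegral_of_indepFun (hA.prodMk hB)
      (measurable_pi_lambda _ hP) hind hF]
  simp only [hquenched]
  change ∫⁻ ω, {ω | A ω = B ω}.piecewise (fun _ => ∫⁻ ω, u (P y₀ ω) ^ 2 ∂μ)
    (fun _ => (∫⁻ ω, u (P y₀ ω) ∂μ) ^ 2) ω ∂μ = _
  rw [lintegral_piecewise (measurableSet_eq_fun hA hB), setLIntegral_const, setLIntegral_const,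
    add_comm]

lemma integral_natCast_mul_natCast_eq_of_lintegral_eq {f g : Ω → ℕ} (hf : Measurable f) (hg : Measurable g)
    {W : Ω → ℝ} (hW₀ : ∀ ω, 0 ≤ W ω) (hW : MemLp W 2 μ) {D : Set Ω} (hD : MeasurableSet D)
    (h : ∫⁻ ω, (f ω : ℝ≥0∞) * g ω ∂μ = (∫⁻ ω, ENNReal.ofReal (W ω) ∂μ) ^ 2 * μ Dᶜ
      + (∫⁻ ω, ENNReal.ofReal (W ω) ^ 2 ∂μ) * μ D) :
    Integrable (fun ω => (f ω : ℝ) * g ω) μ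
      ∧ ∫ ω, (f ω : ℝ) * g ω ∂μ = μ[W] ^ 2 + variance W μ * μ.real D := by
  have hW₁ : ∫⁻ ω, ENNReal.ofReal (W ω) ∂μ = ENNReal.ofReal μ[W] :=
    (ofReal_integral_eq_lintegral_ofReal (hW.integrable one_le_two) (.of_forall hW₀)).symm
  have hW₂ : ∫⁻ ω, ENNReal.ofReal (W ω) ^ 2 ∂μ = ENNReal.ofReal (∫ ω, W ω ^ 2 ∂μ) := by
    simp_rw [← ENNReal.ofReal_pow (hW₀ _)]
    exact (ofReal_integral_eq_lintegral_ofReal hW.integrable_sq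
      (.of_forall fun ω => sq_nonneg _)).symm
  have hmeas : AEMeasurable (fun ω => (f ω : ℝ≥0∞) * g ω) μ :=
    (((measurable_of_countable (fun n : ℕ => (n : ℝ≥0∞))).comp hf).mul
      ((measurable_of_countable (fun n : ℕ => (n : ℝ≥0∞))).comp hg)).aemeasurable
  have hfin : ∫⁻ ω, (f ω : ℝ≥0∞) * g ω ∂μ ≠ ∞ := by
    rw [h, hW₁, hW₂]; finiteness
  have hcast : (fun ω => (f ω : ℝ) * g ω) = fun ω => ((f ω : ℝ≥0∞) * g ω).toReal :=
    funext fun ω => by simp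
  rw [hcast]
  refine ⟨integrable_toReal_of_lintegral_ne_top hmeas hfin, ?_⟩
  rw [integral_toReal hmeas (ae_lt_top' hmeas hfin), h, hW₁, hW₂, variance_eq_sub hW,
    ENNReal.toReal_add (by finiteness) (by finiteness)]
  simp only [ENNReal.toReal_mul, ENNReal.toReal_pow, ENNReal.toReal_ofReal (integral_nonneg hW₀),
    ENNReal.toReal_ofReal (integral_nonneg fun ω => sq_nonneg (W ω)), ← measureReal_def,
    probReal_compl_eq_one_sub hD, Pi.pow_apply]
  ring

lemma integral_natCast_mul_natCast_eq_of_condGeometric {ξ : ℕ → Ω → ℕ}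
    (hξ : ∀ k, Measurable (ξ k)) {S : ℕ → Ω → ℤ} (hS : ∀ n, Measurable (S n))
    {P : ℤ → Ω → ℝ} (hP : ∀ y, Measurable (P y)) (hP01 : ∀ y ω, P y ω ∈ Set.Ico (0 : ℝ) 1)
    (hPindep : iIndepFun P μ) (hPid : ∀ y, IdentDistrib (P y) (P 0) μ μ)
    (hSP : ∀ i j, IndepFun (fun ω => (S i ω, S j ω)) (fun ω y => P y ω) μ)
    (hW : MemLp (fun ω => odds (P 0 ω)) 2 μ)
    (hlaw : ∀ (n : ℕ) (m : Fin n → ℕ), μ {ω | ∀ t : Fin n, ξ t ω = m t}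
      = ∫⁻ ω, ∏ t : Fin n, ENNReal.ofReal ((1 - P (S t ω) ω) * P (S t ω) ω ^ m t) ∂μ)
    {i j : ℕ} (hij : i ≠ j) :
    Integrable (fun ω => (ξ i ω : ℝ) * ξ j ω) μ
      ∧ ∫ ω, (ξ i ω : ℝ) * ξ j ω ∂μ = μ[fun ω => odds (P 0 ω)] ^ 2
        + variance (fun ω => odds (P 0 ω)) μ * μ.real {ω | S i ω = S j ω} := by
  refine integral_natCast_mul_natCast_eq_of_lintegral_eq (hξ i) (hξ j)
    (fun ω => odds_nonneg (hP01 0 ω).1 (hP01 0 ω).2.le) hW (measurableSet_eq_fun (hS i) (hS j)) ?_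
  rw [lintegral_natCast_mul_eq_lintegral_ofReal_odds_mul hξ
    (fun k => measurable_apply_comp_of_countable hP (hS k)) (fun k ω => hP01 _ ω) hlaw hij]
  exact lintegral_comp_apply_mul_comp_apply_of_iIndepFun hP hPindep hPid (hS i) (hS j) (hSP i j)
    (measurable_id.div (measurable_const.sub measurable_id)).ennreal_ofReal

end Environment

section Rademacher

variable [IsProbabilityMeasure μ] {Y : Ω → ℤ}

lemma ae_eq_one_or_eq_neg_one (hY : Measurable Y)
    (hlaw : μ {ω | Y ω = 1} = 1 / 2 ∧ μ {ω | Y ω = -1} = 1 / 2) :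
    ∀ᵐ ω ∂μ, Y ω = 1 ∨ Y ω = -1 := by
  have h₁ : MeasurableSet {ω | Y ω = 1} := hY (measurableSet_singleton 1)
  have h₂ : MeasurableSet {ω | Y ω = -1} := hY (measurableSet_singleton (-1))
  have hdisj : Disjoint {ω | Y ω = 1} {ω | Y ω = -1} :=
    Set.disjoint_left.2 fun ω h h' => by simp_all
  change μ {ω | Y ω = 1 ∨ Y ω = -1}ᶜ = 0
  rw [Set.ofPred_or, prob_compl_eq_zero_iff (h₁.union h₂), measure_union hdisj h₂, hlaw.1,
    hlaw.2, ENNReal.add_halves]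

lemma identDistrib_of_rademacher {Y' : Ω → ℤ} (hY : Measurable Y) (hY' : Measurable Y')
    (hlaw : μ {ω | Y ω = 1} = 1 / 2 ∧ μ {ω | Y ω = -1} = 1 / 2)
    (hlaw' : μ {ω | Y' ω = 1} = 1 / 2 ∧ μ {ω | Y' ω = -1} = 1 / 2) :
    IdentDistrib Y Y' μ μ := by
  refine ⟨hY.aemeasurable, hY'.aemeasurable, Measure.ext_of_singleton fun z => ?_⟩
  rw [Measure.map_apply hY (measurableSet_singleton z),
    Measure.map_apply hY' (measurableSet_singleton z)]
  by_cases h₁ : z = 1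
  · exact h₁ ▸ hlaw.1.trans hlaw'.1.symm
  by_cases h₂ : z = -1
  · exact h₂ ▸ hlaw.2.trans hlaw'.2.symm
  have hnull : ∀ {Z : Ω → ℤ}, (∀ᵐ ω ∂μ, Z ω = 1 ∨ Z ω = -1) → μ (Z ⁻¹' {z}) = 0 := by
    intro Z hZ
    refine measure_mono_null (fun ω (hω : Z ω = z) => ?_) (ae_iff.1 hZ)
    rintro (h | h) <;> simp_all
  rw [hnull (ae_eq_one_or_eq_neg_one hY hlaw), hnull (ae_eq_one_or_eq_neg_one hY' hlaw')]

end Rademacher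

lemma identDistrib_shift {β : Type*} [MeasurableSpace β] {X : ℕ → Ω → β}
    (hX : ∀ k, Measurable (X k)) (hindep : iIndepFun X μ)
    (hid : ∀ k, IdentDistrib (X k) (X 0) μ μ) (s t M : ℕ) :
    IdentDistrib (fun ω (j : Fin M) => X (s + j) ω) (fun ω (j : Fin M) => X (t + j) ω) μ μ := by
  have hlaw : ∀ s, μ.map (fun ω (j : Fin M) => X (s + j) ω)
      = Measure.pi fun _ : Fin M => μ.map (X 0) := fun s => by
    rw [(hindep.precomp (g := fun j : Fin M => s + j)
      fun a b h => Fin.ext (by simpa using h)).map_fun_eq_pi_map fun j => (hX _).aemeasurable]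
    exact congrArg Measure.pi (funext fun j => (hid _).map_eq)
  exact ⟨(measurable_pi_lambda _ fun j => hX _).aemeasurable,
    (measurable_pi_lambda _ fun j => hX _).aemeasurable, (hlaw s).trans (hlaw t).symm⟩

section Walk

variable {X : ℕ → Ω → ℤ} {S : ℕ → Ω → ℤ}

lemma measurable_walk (hX : ∀ k, Measurable (X k))
    (hS : ∀ n ω, S n ω = ∑ k ∈ Finset.range n, X k ω) (n : ℕ) : Measurable (S n) := by
  rw [show S n = fun ω => ∑ k ∈ Finset.range n, X k ω from funext (hS n)]
  exact Finset.measurable_sum _ fun k _ => hX k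

lemma indepFun_walk_pair {γ : Type*} [MeasurableSpace γ] {Z : Ω → γ}
    (hXZ : IndepFun (fun ω n => X n ω) Z μ) (hS : ∀ n ω, S n ω = ∑ k ∈ Finset.range n, X k ω)
    (i j : ℕ) : IndepFun (fun ω => (S i ω, S j ω)) Z μ := by
  have hsum : ∀ n, Measurable fun x : ℕ → ℤ => ∑ k ∈ Finset.range n, x k :=
    fun n => Finset.measurable_sum _ fun k _ => measurable_pi_apply k
  simp only [hS]
  exact hXZ.comp ((hsum i).prodMk (hsum j)) measurable_id

lemma measure_walk_eq_eq_zero_of_odd (hsteps : ∀ᵐ ω ∂μ, ∀ k, X k ω = 1 ∨ X k ω = -1)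
    (hS : ∀ n ω, S n ω = ∑ k ∈ Finset.range n, X k ω) {m n : ℕ} (hmn : Odd (m + n)) :
    μ {ω | S m ω = S n ω} = 0 := by
  refine measure_mono_null (fun ω (hω : S m ω = S n ω) => ?_) (ae_iff.1 hsteps)
  exact fun hstep => Int.sum_range_ne_of_odd_add hstep hmn (by rwa [hS, hS] at hω)

lemma measure_walk_eq_shift (hX : ∀ k, Measurable (X k)) (hindep : iIndepFun X μ)
    (hid : ∀ k, IdentDistrib (X k) (X 0) μ μ) (hS : ∀ n ω, S n ω = ∑ k ∈ Finset.range n, X k ω)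
    (t M : ℕ) : μ {ω | S t ω = S (t + M) ω} = μ {ω | S M ω = 0} := by
  have hincr : ∀ t, {ω | S t ω = S (t + M) ω}
      = (fun ω (j : Fin M) => X (t + j) ω) ⁻¹' {v | ∑ j, v j = 0} := fun t => by
    ext ω
    simp only [Set.mem_ofPred_eq, Set.mem_preimage, hS, Finset.sum_range_add,
      Fin.sum_univ_eq_sum_range (fun j => X (t + j) ω)]
    omega
  have h0 : {ω | S M ω = 0} = {ω | S 0 ω = S (0 + M) ω} := by
    ext ω; simp [hS, eq_comm]
  rw [h0, hincr, hincr]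
  exact (identDistrib_shift hX hindep hid t 0 M).measure_mem_eq (Set.to_countable _).measurableSet

end Walk

end

/-- Alternating-orientation model: `(p_k)` iid in `(0,1)` with
`W = p/(1-p)` square integrable, `S` a simple random walk independent of the
environment, and, conditionally on `(S, (p_y))`, the `ξ_k` independent geometric
with parameter `p_{S_k}`.  Then for every `k ≥ 1`,
`E[(ξ_0 - ξ_1)(ξ_{2k} - ξ_{2k+1})] = 2 Var(p_0/(1-p_0)) P(S_{2k} = 0)`. -/
theorem alternating_model_covariance
    {Ω : Type*} [MeasurableSpace Ω] (μ : Measure Ω) [IsProbabilityMeasure μ]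
    (X : ℕ → Ω → ℤ) (hXmeas : ∀ k, Measurable (X k))
    (hXindep : iIndepFun X μ)
    (hXlaw : ∀ k, μ {ω | X k ω = 1} = 1 / 2 ∧ μ {ω | X k ω = -1} = 1 / 2)
    (S : ℕ → Ω → ℤ) (hS : ∀ n ω, S n ω = ∑ k ∈ Finset.range n, X k ω)
    (P : ℤ → Ω → ℝ) (hPmeas : ∀ y, Measurable (P y))
    (hPrange : ∀ y ω, P y ω ∈ Set.Ioo (0 : ℝ) 1)
    (hPindep : iIndepFun P μ)
    (hPid : ∀ y, IdentDistrib (P y) (P 0) μ μ)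
    (hindepSE : IndepFun (fun ω => fun n => X n ω) (fun ω => fun y => P y ω) μ)
    (hW2 : MemLp (fun ω => P 0 ω / (1 - P 0 ω)) 2 μ)
    (ξ : ℕ → Ω → ℕ) (hξmeas : ∀ k, Measurable (ξ k))
    -- conditionally on `(S, (p_y))`, the `ξ_k` are independent geometric
    -- random variables with parameters `p_{S_k}`:
    (hcond : ∀ (n : ℕ) (m : ℕ → ℕ),
      μ[Set.indicator {ω | ∀ k < n, ξ k ω = m k} (fun _ => (1 : ℝ)) |
          MeasurableSpace.comap
            (fun ω => ((fun j => S j ω, fun y => P y ω) : (ℕ → ℤ) × (ℤ → ℝ)))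
            inferInstance]
        =ᵐ[μ] fun ω =>
          ∏ k ∈ Finset.range n, ((1 - P (S k ω) ω) * (P (S k ω) ω) ^ (m k))) :
    ∀ k : ℕ, 1 ≤ k →
      (∫ ω, ((ξ 0 ω : ℝ) - (ξ 1 ω : ℝ))
          * ((ξ (2 * k) ω : ℝ) - (ξ (2 * k + 1) ω : ℝ)) ∂μ)
        = 2 * variance (fun ω => P 0 ω / (1 - P 0 ω)) μ
            * (μ {ω | S (2 * k) ω = 0}).toReal := by
  intro k hk
  have hSmeas := measurable_walk hXmeas hS
  have hlaw := measure_forall_fin_eq_lintegral_prod (r := fun k ω => P (S k ω) ω) hξmeas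
    (fun k ω => Set.Ioo_subset_Icc_self (hPrange _ _))
    ((measurable_pi_lambda _ hSmeas).prodMk (measurable_pi_lambda _ hPmeas)) hcond
  have hmoment := fun i j (hij : i ≠ j) =>
    integral_natCast_mul_natCast_eq_of_condGeometric hξmeas hSmeas hPmeas
      (fun y ω => Set.Ioo_subset_Ico_self (hPrange y ω)) hPindep hPid
      (indepFun_walk_pair hindepSE hS) hW2 hlaw hij
  have hsteps : ∀ᵐ ω ∂μ, ∀ n, X n ω = 1 ∨ X n ω = -1 :=
    ae_all_iff.2 fun n => ae_eq_one_or_eq_neg_one (hXmeas n) (hXlaw n)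
  have hreturn : {ω | S 0 ω = S (2 * k) ω} = {ω | S (2 * k) ω = 0} := by
    ext ω; simp [hS, eq_comm]
  have hshift : μ {ω | S 1 ω = S (2 * k + 1) ω} = μ {ω | S (2 * k) ω = 0} := by
    rw [add_comm, measure_walk_eq_shift hXmeas hXindep
      (fun n => identDistrib_of_rademacher (hXmeas n) (hXmeas 0) (hXlaw n) (hXlaw 0)) hS]
  obtain ⟨hi₁, he₁⟩ := hmoment 0 (2 * k) (by omega)
  obtain ⟨hi₂, he₂⟩ := hmoment 0 (2 * k + 1) (by omega)
  obtain ⟨hi₃, he₃⟩ := hmoment 1 (2 * k) (by omega)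
  obtain ⟨hi₄, he₄⟩ := hmoment 1 (2 * k + 1) (by omega)
  change _ = 2 * variance (fun ω => odds (P 0 ω)) μ * _
  rw [integral_sub_mul_sub hi₁ hi₂ hi₃ hi₄, he₁, he₂, he₃, he₄, hreturn]
  simp only [measureReal_def, hshift, ENNReal.toReal_zero,
    measure_walk_eq_eq_zero_of_odd hsteps hS (by simp : Odd (0 + (2 * k + 1))),
    measure_walk_eq_eq_zero_of_odd hsteps hS (by simp : Odd (1 + 2 * k))]
  ring
end
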